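/- arXiv:2502.19901 — 7 statements merged into one kernel-verified Lean document; each statement's English description precedes it below -/
import Mathlib

section
/- Let b>0, μ∈ℝ, r>0, x_R∈(0,b), and set β=√(μ²+2r). Define π(x) = (sinh((b−x_R)β) + e^{μ(b−x)}·sinh((x_R−x)β)) / (sinh((b−x_R)β) + e^{bμ}·sinh(x_R β)) for x∈[0,b]. Then π satisfies (1/2)π''(x) + μ·π'(x) − r·π(x) + r·π(x_R) = 0 for all x∈(0,b), together with the boundary conditions π(0)=1 and π(b)=0. -/
/-! With `β² = μ² + 2r`, every `x ↦ e^{μ(a-x)} (p sinh((c-x)β) + q cosh((c-x)β))` solves the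
homogeneous equation `½u'' + μu' - ru = 0`: the factor `e^{-μx}` removes the drift and leaves
`w'' = β² w`. The exit probability is an affine image `k + m u` of such a `u` with `u(x_R) = 0`,
so `r π(x_R) = r k` exactly cancels the constant term. -/

open Real

namespace ResettingExit

variable (μ β a c : ℝ)

noncomputable def dampedHyperbolic (p q x : ℝ) : ℝ :=
  exp (μ * (a - x)) * (p * sinh ((c - x) * β) + q * cosh ((c - x) * β))

theorem hasDerivAt_dampedHyperbolic (p q x : ℝ) :
    HasDerivAt (dampedHyperbolic μ β a c p q)
      (dampedHyperbolic μ β a c (-μ * p - β * q) (-μ * q - β * p) x) x := by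
  have hlin : ∀ s, HasDerivAt (fun x => s * (a - x)) (-s) x := fun s => by
    simpa using ((hasDerivAt_id x).const_sub a).const_mul s
  have harg : HasDerivAt (fun x => (c - x) * β) (-β) x := by
    simpa using ((hasDerivAt_id x).const_sub c).mul_const β
  have h := ((hlin μ).exp).mul ((harg.sinh.const_mul p).add (harg.cosh.const_mul q))
  refine h.congr_deriv ?_
  simp only [dampedHyperbolic, Pi.add_apply]
  ring

theorem deriv_dampedHyperbolic (p q : ℝ) :
    deriv (dampedHyperbolic μ β a c p q) =
      dampedHyperbolic μ β a c (-μ * p - β * q) (-μ * q - β * p) :=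
  funext fun x => (hasDerivAt_dampedHyperbolic μ β a c p q x).deriv

theorem dampedHyperbolic_ode {r : ℝ} (hβ : β ^ 2 = μ ^ 2 + 2 * r) (p q x : ℝ) :
    (1 / 2) * deriv (deriv (dampedHyperbolic μ β a c p q)) x
      + μ * deriv (dampedHyperbolic μ β a c p q) x - r * dampedHyperbolic μ β a c p q x = 0 := by
  simp only [deriv_dampedHyperbolic, dampedHyperbolic]
  linear_combination (1 / 2) * exp (μ * (a - x)) * (p * sinh ((c - x) * β)
    + q * cosh ((c - x) * β)) * hβ

end ResettingExit

theorem ode_resetting_of_ode_homogeneous {μ r : ℝ} {u : ℝ → ℝ} {x : ℝ}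
    (hu : (1 / 2) * deriv (deriv u) x + μ * deriv u x - r * u x = 0) (k m : ℝ) :
    (1 / 2) * deriv (deriv fun y => k + m * u y) x + μ * deriv (fun y => k + m * u y) x
      - r * (k + m * u x) + r * k = 0 := by
  simp only [deriv_const_add', deriv_const_mul_field']
  linear_combination m * hu

open ResettingExit in
theorem stmt0_general (b μ r x_R : ℝ) (hr : 0 < r)
    (hxR : x_R ∈ Set.Ioo 0 b)
    (β : ℝ) (hβ : β = Real.sqrt (μ ^ 2 + 2 * r))
    (piExit : ℝ → ℝ)
    (hpiExit : ∀ x, piExit x =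
      (Real.sinh ((b - x_R) * β) + Real.exp (μ * (b - x)) * Real.sinh ((x_R - x) * β)) /
      (Real.sinh ((b - x_R) * β) + Real.exp (b * μ) * Real.sinh (x_R * β))) :
    (∀ x ∈ Set.Ioo 0 b,
      (1 / 2) * deriv (deriv piExit) x + μ * deriv piExit x - r * piExit x + r * piExit x_R = 0) ∧
    piExit 0 = 1 ∧ piExit b = 0 := by
  obtain ⟨hx0, hxb⟩ := hxR
  have hrad : 0 ≤ μ ^ 2 + 2 * r := by positivity
  have hβpos : 0 < β := hβ ▸ Real.sqrt_pos.mpr (by positivity)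
  have hβsq : β ^ 2 = μ ^ 2 + 2 * r := hβ ▸ Real.sq_sqrt hrad
  set A := sinh ((b - x_R) * β)
  set D := A + exp (b * μ) * sinh (x_R * β)
  have hD : 0 < D := add_pos (sinh_pos_iff.mpr (by nlinarith))
    (mul_pos (exp_pos _) (sinh_pos_iff.mpr (mul_pos hx0 hβpos)))
  have hpi : piExit = fun x => A / D + D⁻¹ * dampedHyperbolic μ β b x_R 1 0 x := by
    funext x
    rw [hpiExit, dampedHyperbolic]
    ring
  have hpi_xR : piExit x_R = A / D := by simp [hpi, dampedHyperbolic]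
  refine ⟨fun x _ => ?_, ?_, ?_⟩
  · rw [hpi_xR, hpi]
    exact ode_resetting_of_ode_homogeneous (dampedHyperbolic_ode μ β b x_R hβsq 1 0 x) _ _
  · rw [hpiExit, sub_zero, sub_zero, mul_comm μ]
    exact div_self hD.ne'
  · rw [hpiExit, sub_self, mul_zero, exp_zero, one_mul, ← neg_sub b x_R, neg_mul, sinh_neg,
      add_neg_cancel, zero_div]

theorem stmt0 (b μ r x_R : ℝ) (hb : 0 < b) (hr : 0 < r)
    (hxR : x_R ∈ Set.Ioo 0 b)
    (β : ℝ) (hβ : β = Real.sqrt (μ ^ 2 + 2 * r))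
    (piExit : ℝ → ℝ)
    (hpiExit : ∀ x, piExit x =
      (Real.sinh ((b - x_R) * β) + Real.exp (μ * (b - x)) * Real.sinh ((x_R - x) * β)) /
      (Real.sinh ((b - x_R) * β) + Real.exp (b * μ) * Real.sinh (x_R * β))) :
    (∀ x ∈ Set.Ioo 0 b,
      (1 / 2) * deriv (deriv piExit) x + μ * deriv piExit x - r * piExit x + r * piExit x_R = 0) ∧
    piExit 0 = 1 ∧ piExit b = 0 :=
  stmt0_general b μ r x_R hr hxR β hβ piExit hpiExit
end

section
/- Let b>0, μ∈ℝ, x_R∈(0,b), and for r>0 set β_r=√(μ²+2r) and π_r = sinh((b−x_R)β_r) / (sinh((b−x_R)β_r) + e^{bμ}·sinh(x_R β_r)). Then as r→+∞: if x_R < b/2 then π_r → 1; if x_R = b/2 then π_r → 1/(1+e^{μb}); and if x_R > b/2 then π_r → 0. -/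
/-!
As `t → ∞`, `sinh (c t) ~ exp (c t) / 2` for `c > 0`, so `sinh (p t) / sinh (q t) ~ exp ((p - q) t) → 0`
when `0 < p < q`. Since `β_r → ∞`, the limit of `π_r` is decided by which of `x_R` and `b - x_R` is
larger; at `x_R = b / 2` the two `sinh` factors coincide and `π_r` is eventually constant.
-/

open Real Filter Topology Asymptotics

lemma Real.isEquivalent_sinh_atTop : sinh ~[atTop] fun x => exp x / 2 := by
  refine isEquivalent_of_tendsto_one ?_
  have h : Tendsto (fun x => 1 - exp (-x) ^ 2) atTop (𝓝 (1 - 0 ^ 2)) :=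
    tendsto_const_nhds.sub (tendsto_exp_neg_atTop_nhds_zero.pow 2)
  rw [zero_pow two_ne_zero, sub_zero] at h
  refine h.congr fun x => ?_
  have : exp (-x) * exp x = 1 := by rw [← exp_add, neg_add_cancel, exp_zero]
  simp only [Pi.div_apply, sinh_eq]
  field_simp
  linear_combination (-exp (-x)) * this

lemma tendsto_sinh_mul_div_sinh_mul_atTop {p q : ℝ} (hp : 0 < p) (hpq : p < q) :
    Tendsto (fun t => sinh (p * t) / sinh (q * t)) atTop (𝓝 0) := by
  have hsinh {c : ℝ} (hc : 0 < c) : (fun t => sinh (c * t)) ~[atTop] fun t => exp (c * t) / 2 :=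
    isEquivalent_sinh_atTop.comp_tendsto (tendsto_id.const_mul_atTop hc)
  refine ((hsinh hp).div (hsinh (hp.trans hpq))).symm.tendsto_nhds ?_
  have hlin : Tendsto (fun t => (p - q) * t) atTop atBot :=
    tendsto_id.const_mul_atTop_of_neg (sub_neg.mpr hpq)
  refine (tendsto_exp_atBot.comp hlin).congr fun t => ?_
  simp only [Function.comp_apply, Pi.div_apply, sub_mul, exp_sub]
  field_simp

lemma tendsto_sinh_div_sinh_add_mul_sinh_of_lt {p q : ℝ} (hp : 0 < p) (hpq : p < q) (K : ℝ) :
    Tendsto (fun t => sinh (q * t) / (sinh (q * t) + K * sinh (p * t))) atTop (𝓝 1) := by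
  have h := (tendsto_const_nhds (x := (1 : ℝ))).div (tendsto_const_nhds.add
    ((tendsto_sinh_mul_div_sinh_mul_atTop hp hpq).const_mul K)) (by simp : (1 : ℝ) + K * 0 ≠ 0)
  rw [mul_zero, add_zero, div_one] at h
  refine h.congr' ?_
  filter_upwards [eventually_gt_atTop 0] with t ht
  have : sinh (q * t) ≠ 0 := sinh_ne_zero.mpr (mul_pos (hp.trans hpq) ht).ne'
  rw [Pi.div_apply, mul_div_assoc', one_add_div this, one_div_div]

lemma tendsto_sinh_div_sinh_add_mul_sinh_of_gt {p q : ℝ} (hq : 0 < q) (hqp : q < p) {K : ℝ}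
    (hK : K ≠ 0) :
    Tendsto (fun t => sinh (q * t) / (sinh (q * t) + K * sinh (p * t))) atTop (𝓝 0) := by
  have hρ := tendsto_sinh_mul_div_sinh_mul_atTop hq hqp
  have h := hρ.div (hρ.add_const K) (by simpa using hK)
  rw [zero_div] at h
  refine h.congr' ?_
  filter_upwards [eventually_gt_atTop 0] with t ht
  have : sinh (p * t) ≠ 0 := sinh_ne_zero.mpr (mul_pos (hq.trans hqp) ht).ne'
  rw [Pi.div_apply, div_add' _ _ _ this, div_div_div_cancel_right₀ this, mul_comm]

lemma tendsto_sinh_div_sinh_add_mul_sinh_self {q : ℝ} (hq : q ≠ 0) (K : ℝ) :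
    Tendsto (fun t => sinh (q * t) / (sinh (q * t) + K * sinh (q * t))) atTop
      (𝓝 (1 / (1 + K))) := by
  refine tendsto_const_nhds.congr' ?_
  filter_upwards [eventually_ne_atTop 0] with t ht
  have : sinh (q * t) ≠ 0 := sinh_ne_zero.mpr (mul_ne_zero hq ht)
  rw [eq_comm, ← one_add_mul, mul_comm (1 + K), div_mul_cancel_left₀ this, one_div]

lemma tendsto_sqrt_add_mul_atTop (a : ℝ) {c : ℝ} (hc : 0 < c) :
    Tendsto (fun r => √(a + c * r)) atTop atTop :=
  tendsto_sqrt_atTop.comp (tendsto_atTop_add_const_left _ a (tendsto_id.const_mul_atTop hc))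

theorem stmt1_general (b μ x_R : ℝ) (hxR : x_R ∈ Set.Ioo 0 b)
    (piExit : ℝ → ℝ)
    (hpiExit : ∀ r, piExit r =
      Real.sinh ((b - x_R) * Real.sqrt (μ ^ 2 + 2 * r)) /
      (Real.sinh ((b - x_R) * Real.sqrt (μ ^ 2 + 2 * r)) +
        Real.exp (b * μ) * Real.sinh (x_R * Real.sqrt (μ ^ 2 + 2 * r)))) :
    (x_R < b / 2 → Tendsto piExit atTop (nhds 1)) ∧
    (x_R = b / 2 → Tendsto piExit atTop (nhds (1 / (1 + Real.exp (μ * b))))) ∧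
    (x_R > b / 2 → Tendsto piExit atTop (nhds 0)) := by
  obtain ⟨hx0, hxb⟩ := hxR
  have hβ := tendsto_sqrt_add_mul_atTop (μ ^ 2) two_pos
  have hπ : piExit = (fun t => sinh ((b - x_R) * t) /
      (sinh ((b - x_R) * t) + exp (b * μ) * sinh (x_R * t))) ∘ fun r => √(μ ^ 2 + 2 * r) :=
    funext hpiExit
  rw [hπ]
  refine ⟨fun hlt => ?_, fun heq => ?_, fun hgt => ?_⟩
  · exact (tendsto_sinh_div_sinh_add_mul_sinh_of_lt hx0 (by linarith) _).comp hβ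
  · rw [show b - x_R = x_R by linarith, mul_comm μ b]
    exact (tendsto_sinh_div_sinh_add_mul_sinh_self hx0.ne' _).comp hβ
  · exact (tendsto_sinh_div_sinh_add_mul_sinh_of_gt (by linarith) (by linarith)
      (exp_pos _).ne').comp hβ

theorem stmt1 (b μ x_R : ℝ) (hb : 0 < b) (hxR : x_R ∈ Set.Ioo 0 b)
    (piExit : ℝ → ℝ)
    (hpiExit : ∀ r, piExit r =
      Real.sinh ((b - x_R) * Real.sqrt (μ ^ 2 + 2 * r)) /
      (Real.sinh ((b - x_R) * Real.sqrt (μ ^ 2 + 2 * r)) +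
        Real.exp (b * μ) * Real.sinh (x_R * Real.sqrt (μ ^ 2 + 2 * r)))) :
    (x_R < b / 2 → Tendsto piExit atTop (nhds 1)) ∧
    (x_R = b / 2 → Tendsto piExit atTop (nhds (1 / (1 + Real.exp (μ * b))))) ∧
    (x_R > b / 2 → Tendsto piExit atTop (nhds 0)) :=
  stmt1_general b μ x_R hxR piExit hpiExit
end

section
/- Let b>0, r>0, λ>0 and set α=√(2(λ+r)), x_R∈(0,b). Define Q(x,λ) = (sinh(αb) − sinh(αx) − sinh(α(b−x))) / (λ·sinh(αb) + r·sinh(αx_R) + r·sinh(α(b−x_R))) for x∈[0,b]. Then Q(·,λ) satisfies (1/2)·∂²Q/∂x²(x,λ) − (r+λ)·Q(x,λ) + r·Q(x_R,λ) = −1 for all x∈(0,b), with Q(0,λ)=Q(b,λ)=0. -/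
open Real

/-!
With `g x = sinh (α x) + sinh (α (b - x))` we have `Q = (sinh (α b) - g) / D` and `g'' = α² g`,
so `Q'' / 2 - (r + λ) Q = -(r + λ) sinh (α b) / D`; adding `r Q(x_R)` leaves
`-(λ sinh (α b) + r g(x_R)) / D = -1`, since that numerator is exactly
`D`, which is positive.
-/

section SinhReflection

variable (α b : ℝ)

theorem hasDerivAt_sinh_mul_add_sinh_mul_sub (x : ℝ) :
    HasDerivAt (fun x => sinh (α * x) + sinh (α * (b - x)))
      (α * (cosh (α * x) - cosh (α * (b - x)))) x := by
  have h₁ := ((hasDerivAt_id' x).const_mul α).sinh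
  have h₂ := (((hasDerivAt_id' x).const_sub b).const_mul α).sinh
  exact (h₁.add h₂).congr_deriv (by ring)

theorem hasDerivAt_cosh_mul_sub_cosh_mul_sub (x : ℝ) :
    HasDerivAt (fun x => α * (cosh (α * x) - cosh (α * (b - x))))
      (α ^ 2 * (sinh (α * x) + sinh (α * (b - x)))) x := by
  have h₁ := ((hasDerivAt_id' x).const_mul α).cosh
  have h₂ := (((hasDerivAt_id' x).const_sub b).const_mul α).cosh
  exact ((h₁.sub h₂).const_mul α).congr_deriv (by ring)

theorem deriv_deriv_sinh_mul_add_sinh_mul_sub :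
    deriv (deriv fun x => sinh (α * x) + sinh (α * (b - x))) =
      fun x => α ^ 2 * (sinh (α * x) + sinh (α * (b - x))) := by
  have hg : deriv (fun x => sinh (α * x) + sinh (α * (b - x))) =
      fun x => α * (cosh (α * x) - cosh (α * (b - x))) :=
    funext fun x => (hasDerivAt_sinh_mul_add_sinh_mul_sub α b x).deriv
  rw [hg]
  exact funext fun x => (hasDerivAt_cosh_mul_sub_cosh_mul_sub α b x).deriv

end SinhReflection

theorem deriv_deriv_const_sub_div (c d : ℝ) (f : ℝ → ℝ) :
    deriv (deriv fun x => (c - f x) / d) = fun x => -deriv (deriv f) x / d := by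
  have hderiv : deriv (fun x => (c - f x) / d) = fun x => -deriv f x / d :=
    funext fun x => by rw [deriv_div_const, deriv_const_sub]
  rw [hderiv]
  funext x
  rw [deriv_div_const, deriv.fun_neg]

theorem sinh_mul_add_sinh_mul_sub_pos {α b r lam x_R : ℝ} (hα : 0 < α) (hr : 0 < r)
    (hlam : 0 < lam) (hxR : x_R ∈ Set.Ioo 0 b) :
    0 < lam * sinh (α * b) + r * sinh (α * x_R) + r * sinh (α * (b - x_R)) := by
  obtain ⟨hx₀, hxb⟩ := hxR
  have hb : 0 < sinh (α * b) := sinh_pos_iff.mpr (mul_pos hα (hx₀.trans hxb))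
  have hx : 0 < sinh (α * x_R) := sinh_pos_iff.mpr (mul_pos hα hx₀)
  have hbx : 0 < sinh (α * (b - x_R)) := sinh_pos_iff.mpr (mul_pos hα (sub_pos.mpr hxb))
  positivity

theorem stmt4_general (b r lam x_R : ℝ) (hr : 0 < r) (hlam : 0 < lam)
    (hxR : x_R ∈ Set.Ioo 0 b)
    (α : ℝ) (hα : α = Real.sqrt (2 * (lam + r)))
    (Q : ℝ → ℝ)
    (hQ : ∀ x, Q x =
      (Real.sinh (α * b) - Real.sinh (α * x) - Real.sinh (α * (b - x))) /
      (lam * Real.sinh (α * b) + r * Real.sinh (α * x_R) + r * Real.sinh (α * (b - x_R)))) :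
    (∀ x ∈ Set.Ioo 0 b,
      (1 / 2) * deriv (deriv Q) x - (r + lam) * Q x + r * Q x_R = -1) ∧
    Q 0 = 0 ∧ Q b = 0 := by
  have hα_sq : α ^ 2 = 2 * (lam + r) := by rw [hα, sq_sqrt (by positivity)]
  have hD := sinh_mul_add_sinh_mul_sub_pos (hα ▸ sqrt_pos.mpr (by positivity)) hr hlam hxR
  have hQ' : Q = fun x => (sinh (α * b) - (sinh (α * x) + sinh (α * (b - x)))) /
      (lam * sinh (α * b) + r * sinh (α * x_R) + r * sinh (α * (b - x_R))) :=
    funext fun x => by rw [hQ, sub_sub]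
  refine ⟨fun x _ => ?_, by simp [hQ], by simp [hQ]⟩
  rw [hQ', deriv_deriv_const_sub_div, deriv_deriv_sinh_mul_add_sinh_mul_sub, hα_sq]
  field_simp
  ring

theorem stmt4 (b r lam x_R : ℝ) (hb : 0 < b) (hr : 0 < r) (hlam : 0 < lam)
    (hxR : x_R ∈ Set.Ioo 0 b)
    (α : ℝ) (hα : α = Real.sqrt (2 * (lam + r)))
    (Q : ℝ → ℝ)
    (hQ : ∀ x, Q x =
      (Real.sinh (α * b) - Real.sinh (α * x) - Real.sinh (α * (b - x))) /
      (lam * Real.sinh (α * b) + r * Real.sinh (α * x_R) + r * Real.sinh (α * (b - x_R)))) :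
    (∀ x ∈ Set.Ioo 0 b,
      (1 / 2) * deriv (deriv Q) x - (r + lam) * Q x + r * Q x_R = -1) ∧
    Q 0 = 0 ∧ Q b = 0 :=
  stmt4_general b r lam x_R hr hlam hxR α hα Q hQ
end

section
/- Let b>0, r>0, λ>0, x_R∈(0,b), α=√(2(λ+r)). Define M(x,λ) = (r·sinh(αx_R) + r·sinh(α(b−x_R)) + λ·sinh(αx) + λ·sinh(α(b−x))) / (λ·sinh(αb) + r·sinh(αx_R) + r·sinh(α(b−x_R))) for x∈[0,b]. Then M(·,λ) satisfies (1/2)·∂²M/∂x²(x,λ) − (r+λ)·M(x,λ) + r·M(x_R,λ) = 0 for all x∈(0,b), with boundary conditions M(0,λ)=M(b,λ)=1. -/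
/-!
Writing `S(x) = sinh (α x) + sinh (α (b - x))`, the numerator of `M` is `r S(x_R) + λ S(x)` and
the denominator is `r S(x_R) + λ S(0)`, since `S(0) = S(b) = sinh (α b)`. Hence `M(0) = M(b) = 1`,
and because `S'' = α² S = 2 (λ + r) S`, the equation `½ M'' - (r + λ) M + r M(x_R) = 0` is an
algebraic identity in `S(x)` and `S(x_R)`.
-/

open Real

noncomputable def sinhSum (α b x : ℝ) : ℝ := sinh (α * x) + sinh (α * (b - x))

section sinhSum

variable (α b : ℝ)

lemma sinhSum_zero : sinhSum α b 0 = sinh (α * b) := by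
  simp [sinhSum]

lemma sinhSum_self : sinhSum α b b = sinh (α * b) := by
  simp [sinhSum]

lemma sinhSum_pos {α b x : ℝ} (hα : 0 < α) (hx : x ∈ Set.Ioo 0 b) : 0 < sinhSum α b x :=
  add_pos (sinh_pos_iff.2 (mul_pos hα hx.1)) (sinh_pos_iff.2 (mul_pos hα (sub_pos.2 hx.2)))

lemma hasDerivAt_mul_sub (x : ℝ) : HasDerivAt (fun x => α * (b - x)) (-α) x := by
  simpa using ((hasDerivAt_id x).const_sub b).const_mul α

lemma hasDerivAt_sinhSum (x : ℝ) :
    HasDerivAt (sinhSum α b) (α * (cosh (α * x) - cosh (α * (b - x)))) x :=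
  (((hasDerivAt_id' x).const_mul α).sinh.add (hasDerivAt_mul_sub α b x).sinh).congr_deriv
    (by ring)

lemma deriv_deriv_sinhSum : deriv (deriv (sinhSum α b)) = fun x => α ^ 2 * sinhSum α b x := by
  have hderiv : deriv (sinhSum α b) = fun x => α * (cosh (α * x) - cosh (α * (b - x))) :=
    funext fun x => (hasDerivAt_sinhSum α b x).deriv
  funext x
  rw [hderiv]
  exact (((((hasDerivAt_id' x).const_mul α).cosh.sub
    (hasDerivAt_mul_sub α b x).cosh).const_mul α).congr_deriv (by rw [sinhSum]; ring)).deriv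

end sinhSum

lemma resetting_equation_of_deriv_deriv {f : ℝ → ℝ} {r lam : ℝ}
    (hf : deriv (deriv f) = fun x => 2 * (lam + r) * f x) (x_R D x : ℝ) :
    (1 / 2) * deriv (deriv fun y => (r * f x_R + lam * f y) / D) x
      - (r + lam) * ((r * f x_R + lam * f x) / D) + r * ((r * f x_R + lam * f x_R) / D) = 0 := by
  simp only [div_eq_mul_inv, deriv_const_add', mul_comm _ D⁻¹, ← mul_assoc,
    deriv_const_mul_field', hf]
  ring

theorem stmt5_general (b r lam x_R : ℝ) (hr : 0 < r) (hlam : 0 < lam)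
    (hxR : x_R ∈ Set.Ioo 0 b)
    (α : ℝ) (hα : α = Real.sqrt (2 * (lam + r)))
    (M : ℝ → ℝ)
    (hM : ∀ x, M x =
      (r * Real.sinh (α * x_R) + r * Real.sinh (α * (b - x_R)) +
        lam * Real.sinh (α * x) + lam * Real.sinh (α * (b - x))) /
      (lam * Real.sinh (α * b) + r * Real.sinh (α * x_R) + r * Real.sinh (α * (b - x_R)))) :
    (∀ x ∈ Set.Ioo 0 b,
      (1 / 2) * deriv (deriv M) x - (r + lam) * M x + r * M x_R = 0) ∧
    M 0 = 1 ∧ M b = 1 := by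
  have hα0 : 0 < α := hα ▸ sqrt_pos.2 (by positivity)
  have hα2 : α ^ 2 = 2 * (lam + r) := hα ▸ sq_sqrt (by positivity)
  have hD : r * sinhSum α b x_R + lam * sinh (α * b) ≠ 0 :=
    (add_pos (mul_pos hr (sinhSum_pos hα0 hxR))
      (mul_pos hlam (sinh_pos_iff.2 (mul_pos hα0 (hxR.1.trans hxR.2))))).ne'
  obtain rfl : M = fun x => (r * sinhSum α b x_R + lam * sinhSum α b x) /
      (r * sinhSum α b x_R + lam * sinh (α * b)) := by
    funext x
    rw [hM, sinhSum, sinhSum]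
    ring
  refine ⟨fun x _ => ?_, ?_, ?_⟩
  · exact resetting_equation_of_deriv_deriv (hα2 ▸ deriv_deriv_sinhSum α b) x_R _ x
  · simp only [sinhSum_zero, div_self hD]
  · simp only [sinhSum_self, div_self hD]

theorem stmt5 (b r lam x_R : ℝ) (hb : 0 < b) (hr : 0 < r) (hlam : 0 < lam)
    (hxR : x_R ∈ Set.Ioo 0 b)
    (α : ℝ) (hα : α = Real.sqrt (2 * (lam + r)))
    (M : ℝ → ℝ)
    (hM : ∀ x, M x =
      (r * Real.sinh (α * x_R) + r * Real.sinh (α * (b - x_R)) +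
        lam * Real.sinh (α * x) + lam * Real.sinh (α * (b - x))) /
      (lam * Real.sinh (α * b) + r * Real.sinh (α * x_R) + r * Real.sinh (α * (b - x_R)))) :
    (∀ x ∈ Set.Ioo 0 b,
      (1 / 2) * deriv (deriv M) x - (r + lam) * M x + r * M x_R = 0) ∧
    M 0 = 1 ∧ M b = 1 :=
  stmt5_general b r lam x_R hr hlam hxR α hα M hM
end

section
/- Let b>0, x_R∈(0,b). Then lim_{r→+∞} (1/r)·( sinh(b√(2r)) / (sinh(x_R√(2r)) + sinh((b−x_R)√(2r))) − 1 ) = +∞. -/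
/-!
For `a, c ≥ 0` the addition formula `sinh (a + c) = sinh a cosh c + cosh a sinh c` gives
`sinh (a + c) ≥ cosh (min a c) * (sinh a + sinh c)`. With `a = x_R s`, `c = (b - x_R) s` and
`s = √(2r)`, the ratio inside the limit is therefore at least `cosh (δ s)`, where
`δ = min x_R (b - x_R) > 0`. Since `cosh t ≥ t⁴ / 48` and `s⁴ = 4r²`, the whole expression is
at least `δ⁴ r / 12 - 1`.
-/

open Real Filter

lemma cosh_min_mul_sinh_add_sinh_le_sinh_add {a c : ℝ} (ha : 0 ≤ a) (hc : 0 ≤ c) :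
    cosh (min a c) * (sinh a + sinh c) ≤ sinh (a + c) := by
  have hcosh_min (y : ℝ) (hy : 0 ≤ y) (hle : min a c ≤ y) : cosh (min a c) ≤ cosh y :=
    cosh_le_cosh.2 <| by rw [abs_of_nonneg (le_min ha hc), abs_of_nonneg hy]; exact hle
  have h₁ := mul_le_mul_of_nonneg_right (hcosh_min c hc (min_le_right a c)) (sinh_nonneg_iff.2 ha)
  have h₂ := mul_le_mul_of_nonneg_right (hcosh_min a ha (min_le_left a c)) (sinh_nonneg_iff.2 hc)
  rw [sinh_add]
  linarith

lemma pow_four_div_le_cosh (x : ℝ) : x ^ 4 / 48 ≤ cosh x := by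
  rw [← cosh_abs, ← Even.pow_abs (by decide : Even 4), cosh_eq]
  have h₄ := pow_div_factorial_le_exp (x := |x|) (abs_nonneg x) 4
  norm_num [Nat.factorial] at h₄
  linarith [exp_pos (-|x|)]

lemma cosh_min_mul_le_sinh_div_sinh_add_sinh {x b s : ℝ} (hx : 0 < x) (hxb : x < b) (hs : 0 < s) :
    cosh (min x (b - x) * s) ≤ sinh (b * s) / (sinh (x * s) + sinh ((b - x) * s)) := by
  have hbx : 0 < (b - x) * s := mul_pos (sub_pos.2 hxb) hs
  rw [le_div_iff₀ (add_pos (sinh_pos_iff.2 (by positivity)) (sinh_pos_iff.2 hbx)),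
    min_mul_of_nonneg _ _ hs.le, show b * s = x * s + (b - x) * s by ring]
  exact cosh_min_mul_sinh_add_sinh_le_sinh_add (by positivity) hbx.le

theorem stmt9_general (b x_R : ℝ) (hxR : x_R ∈ Set.Ioo 0 b) :
    Tendsto (fun r : ℝ =>
        (1 / r) * (Real.sinh (b * Real.sqrt (2 * r)) /
          (Real.sinh (x_R * Real.sqrt (2 * r)) + Real.sinh ((b - x_R) * Real.sqrt (2 * r))) - 1))
      atTop atTop := by
  obtain ⟨hx₀, hxb⟩ := hxR
  set δ := min x_R (b - x_R)
  have hδ : 0 < δ := lt_min hx₀ (sub_pos.2 hxb)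
  refine tendsto_atTop_mono' _ ?_ <| tendsto_atTop_add_const_right _ (-1) <|
    tendsto_id.const_mul_atTop (by positivity : 0 < δ ^ 4 / 12)
  filter_upwards [eventually_ge_atTop 1] with r hr
  set s := √(2 * r)
  have hs : 0 < s := sqrt_pos.2 (by linarith)
  have hs4 : s ^ 4 = 4 * r ^ 2 := by
    rw [show s ^ 4 = (s ^ 2) ^ 2 by ring, sq_sqrt (by linarith)]; ring
  have hratio : δ ^ 4 * r ^ 2 / 12 ≤
      sinh (b * s) / (sinh (x_R * s) + sinh ((b - x_R) * s)) :=
    calc δ ^ 4 * r ^ 2 / 12 = (δ * s) ^ 4 / 48 := by rw [mul_pow, hs4]; ring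
      _ ≤ cosh (δ * s) := pow_four_div_le_cosh _
      _ ≤ _ := cosh_min_mul_le_sinh_div_sinh_add_sinh hx₀ hxb hs
  have hr₀ : 0 < r := by linarith
  calc δ ^ 4 / 12 * id r + -1 ≤ (1 / r) * (δ ^ 4 * r ^ 2 / 12 - 1) := by
        rw [id, mul_sub, show 1 / r * (δ ^ 4 * r ^ 2 / 12) = δ ^ 4 / 12 * r by field_simp]
        linarith [(div_le_one hr₀).2 hr]
    _ ≤ _ := by gcongr

theorem stmt9 (b x_R : ℝ) (hb : 0 < b) (hxR : x_R ∈ Set.Ioo 0 b) :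
    Tendsto (fun r : ℝ =>
        (1 / r) * (Real.sinh (b * Real.sqrt (2 * r)) /
          (Real.sinh (x_R * Real.sqrt (2 * r)) + Real.sinh ((b - x_R) * Real.sqrt (2 * r))) - 1))
      atTop atTop :=
  stmt9_general b x_R hxR
end

section
/- Let b>0, μ≠0, x∈(0,b). Define for r>0, β_r=√(μ²+2r) and T_r(x) = (e^{−bμ}sinh(bβ_r) − e^{−μx}sinh(xβ_r) − e^{−(b+x)μ}sinh((b−x)β_r)) / (r·(e^{−x_Rμ}sinh(x_Rβ_r) + e^{−(b+x_R)μ}sinh((b−x_R)β_r))), where x_R∈(0,b) is fixed. Then lim_{r→0⁺} T_r(x) = (1/μ)·( b(1−e^{−2μx})/(1−e^{−2μb}) − x ). -/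
/-!
Write `β = √(μ² + 2r)`, so that `r = (β - |μ|)(β + |μ|)/2` and `β → |μ|⁺` as `r → 0⁺`.
At `β = ±μ` every profile `e^{-aμ} sinh(aβ) + e^{-(b+a)μ} sinh((b-a)β)` equals
`±(1 - e^{-2μb})/2` whatever `a` is; the numerator of `T_r` is the difference of the profiles
with `a = b` and `a = x`, so it vanishes at `β = |μ|`, and the limit is its derivative there
divided by `2|μ|` times the (nonzero) denominator profile at `|μ|`.
-/

open Real Filter Topology Set

lemma tendsto_sqrt_sq_add_two_mul_nhdsGT {m : ℝ} (hm : 0 < m) :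
    Tendsto (fun r => √(m ^ 2 + 2 * r)) (𝓝[>] 0) (𝓝[>] m) := by
  have hcont : Tendsto (fun r => √(m ^ 2 + 2 * r)) (𝓝 0) (𝓝 m) := by
    have : Continuous (fun r : ℝ => √(m ^ 2 + 2 * r)) := by fun_prop
    simpa [sqrt_sq hm.le] using this.tendsto 0
  refine tendsto_nhdsWithin_iff.mpr ⟨hcont.mono_left nhdsWithin_le_nhds, ?_⟩
  filter_upwards [self_mem_nhdsWithin] with r (hr : 0 < r)
  calc m = √(m ^ 2) := (sqrt_sq hm.le).symm
    _ < √(m ^ 2 + 2 * r) := sqrt_lt_sqrt (sq_nonneg m) (by linarith)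

lemma tendsto_div_mul_comp_sqrt_sq_add_two_mul {f g : ℝ → ℝ} {m f' : ℝ} (hm : 0 < m)
    (hf : HasDerivAt f f' m) (hf0 : f m = 0) (hg : ContinuousAt g m) (hg0 : g m ≠ 0) :
    Tendsto (fun r => f √(m ^ 2 + 2 * r) / (r * g √(m ^ 2 + 2 * r))) (𝓝[>] 0)
      (𝓝 (f' / (m * g m))) := by
  set β : ℝ → ℝ := fun r => √(m ^ 2 + 2 * r)
  have hβ : Tendsto β (𝓝[>] 0) (𝓝[>] m) := tendsto_sqrt_sq_add_two_mul_nhdsGT hm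
  have hslope : Tendsto (fun r => slope f m (β r)) (𝓝[>] 0) (𝓝 f') :=
    (hasDerivAt_iff_tendsto_slope.mp hf).comp
      (tendsto_nhdsWithin_mono_right (fun y hy => ne_of_gt hy) hβ)
  have hβm : Tendsto β (𝓝[>] 0) (𝓝 m) := hβ.mono_right nhdsWithin_le_nhds
  have hfactor : Tendsto (fun r => 2 / ((β r + m) * g (β r))) (𝓝[>] 0)
      (𝓝 (2 / ((m + m) * g m))) :=
    tendsto_const_nhds.div ((hβm.add tendsto_const_nhds).mul (hg.tendsto.comp hβm))
      (mul_ne_zero (by positivity) hg0)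
  have hvalue : f' * (2 / ((m + m) * g m)) = f' / (m * g m) := by
    field_simp; ring
  rw [← hvalue]
  refine (hslope.mul hfactor).congr' ?_
  filter_upwards [self_mem_nhdsWithin, hβ self_mem_nhdsWithin] with r (hr : 0 < r) (hβr : m < β r)
  have hr2 : 2 * r = (β r - m) * (β r + m) := by
    have hβr_sq : β r ^ 2 = m ^ 2 + 2 * r := sq_sqrt (by positivity)
    linear_combination -hβr_sq
  change slope f m (β r) * (2 / ((β r + m) * g (β r))) = f (β r) / (r * g (β r))
  rw [slope_def_field, hf0, sub_zero]
  have hβr_sub : β r - m ≠ 0 := by linarith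
  have hβr_add : β r + m ≠ 0 := by linarith
  rcases eq_or_ne (g (β r)) 0 with h | h
  · simp [h]
  · field_simp
    linear_combination f (β r) * hr2

lemma exp_mul_sinh (u v : ℝ) : exp u * sinh v = (exp (u + v) - exp (u - v)) / 2 := by
  rw [sinh_eq, exp_add, exp_sub, exp_neg]; field_simp

lemma exp_mul_cosh (u v : ℝ) : exp u * cosh v = (exp (u + v) + exp (u - v)) / 2 := by
  rw [cosh_eq, exp_add, exp_sub, exp_neg]; field_simp

/-- `T_r(x)` is `(exitProfile b μ b β - exitProfile b μ x β) / (r * exitProfile b μ x_R β)`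
at `β = √(μ² + 2r)`. -/
noncomputable def exitProfile (b μ a y : ℝ) : ℝ :=
  exp (-a * μ) * sinh (a * y) + exp (-(b + a) * μ) * sinh ((b - a) * y)

lemma exitProfile_neg (b μ a y : ℝ) : exitProfile b μ a (-y) = -exitProfile b μ a y := by
  simp only [exitProfile, mul_neg, sinh_neg]; ring

lemma exitProfile_self (b μ a : ℝ) : exitProfile b μ a μ = (1 - exp (-2 * μ * b)) / 2 := by
  simp only [exitProfile, exp_mul_sinh]
  ring_nf
  rw [exp_zero]; ring

lemma abs_mul_exitProfile_abs (b μ a : ℝ) :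
    |μ| * exitProfile b μ a |μ| = μ * (1 - exp (-2 * μ * b)) / 2 := by
  rcases abs_choice μ with h | h <;> rw [h]
  · rw [exitProfile_self]; ring
  · rw [exitProfile_neg, exitProfile_self]; ring

lemma hasDerivAt_exitProfile_abs (b μ a : ℝ) :
    HasDerivAt (exitProfile b μ a)
      ((a + b * exp (-2 * μ * a) + (b - a) * exp (-2 * μ * b)) / 2) |μ| := by
  have hcosh (c : ℝ) : cosh (c * |μ|) = cosh (c * μ) := by
    rw [← cosh_abs, abs_mul, abs_abs, ← abs_mul, cosh_abs]
  have hsinh (c : ℝ) : HasDerivAt (fun y => sinh (c * y)) (c * cosh (c * μ)) |μ| := by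
    simpa [hcosh, mul_comm] using ((hasDerivAt_id |μ|).const_mul c).sinh
  refine (((hsinh a).const_mul (exp (-a * μ))).add
    ((hsinh (b - a)).const_mul (exp (-(b + a) * μ)))).congr_deriv ?_
  simp only [mul_left_comm (exp _), exp_mul_cosh]
  ring_nf
  rw [exp_zero]; ring

theorem stmt11_general (b μ x x_R : ℝ) (hb : 0 < b) (hμ : μ ≠ 0)
    (T : ℝ → ℝ)
    (hT : ∀ r, T r =
      (Real.exp (-b * μ) * Real.sinh (b * Real.sqrt (μ ^ 2 + 2 * r)) -
        Real.exp (-μ * x) * Real.sinh (x * Real.sqrt (μ ^ 2 + 2 * r)) -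
        Real.exp (-(b + x) * μ) * Real.sinh ((b - x) * Real.sqrt (μ ^ 2 + 2 * r))) /
      (r * (Real.exp (-x_R * μ) * Real.sinh (x_R * Real.sqrt (μ ^ 2 + 2 * r)) +
        Real.exp (-(b + x_R) * μ) * Real.sinh ((b - x_R) * Real.sqrt (μ ^ 2 + 2 * r))))) :
    Tendsto T (nhdsWithin 0 (Set.Ioi 0))
      (nhds ((1 / μ) * (b * (1 - Real.exp (-2 * μ * x)) / (1 - Real.exp (-2 * μ * b)) - x))) := by
  have hT' : T = fun r => (exitProfile b μ b - exitProfile b μ x) √(|μ| ^ 2 + 2 * r) /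
      (r * exitProfile b μ x_R √(|μ| ^ 2 + 2 * r)) := by
    funext r
    simp only [hT, sq_abs, Pi.sub_apply, exitProfile, sub_self, zero_mul, sinh_zero, mul_zero,
      add_zero, neg_mul, mul_comm μ x, sub_sub]
  have hm : 0 < |μ| := abs_pos.mpr hμ
  have hEb : 1 - exp (-2 * μ * b) ≠ 0 := by
    rw [sub_ne_zero, ne_comm, Ne, exp_eq_one_iff]
    exact mul_ne_zero (mul_ne_zero (by norm_num) hμ) hb.ne'
  have hN0 : (exitProfile b μ b - exitProfile b μ x) |μ| = 0 := by
    rw [Pi.sub_apply, sub_eq_zero]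
    exact mul_left_cancel₀ hm.ne'
      ((abs_mul_exitProfile_abs b μ b).trans (abs_mul_exitProfile_abs b μ x).symm)
  have hN' := (hasDerivAt_exitProfile_abs b μ b).sub (hasDerivAt_exitProfile_abs b μ x)
  have hD := abs_mul_exitProfile_abs b μ x_R
  have hD0 : exitProfile b μ x_R |μ| ≠ 0 := by
    intro h
    rw [h, mul_zero] at hD
    exact mul_ne_zero hμ hEb (by linarith)
  have hcont : ContinuousAt (exitProfile b μ x_R) |μ| := by
    unfold exitProfile; fun_prop
  rw [hT']
  convert tendsto_div_mul_comp_sqrt_sq_add_two_mul hm hN' hN0 hcont hD0 using 2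
  rw [hD]
  generalize exp (-2 * μ * b) = E at hEb ⊢
  field_simp
  ring

theorem stmt11 (b μ x x_R : ℝ) (hb : 0 < b) (hμ : μ ≠ 0)
    (hx : x ∈ Set.Ioo 0 b) (hxR : x_R ∈ Set.Ioo 0 b)
    (T : ℝ → ℝ)
    (hT : ∀ r, T r =
      (Real.exp (-b * μ) * Real.sinh (b * Real.sqrt (μ ^ 2 + 2 * r)) -
        Real.exp (-μ * x) * Real.sinh (x * Real.sqrt (μ ^ 2 + 2 * r)) -
        Real.exp (-(b + x) * μ) * Real.sinh ((b - x) * Real.sqrt (μ ^ 2 + 2 * r))) /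
      (r * (Real.exp (-x_R * μ) * Real.sinh (x_R * Real.sqrt (μ ^ 2 + 2 * r)) +
        Real.exp (-(b + x_R) * μ) * Real.sinh ((b - x_R) * Real.sqrt (μ ^ 2 + 2 * r))))) :
    Tendsto T (nhdsWithin 0 (Set.Ioi 0))
      (nhds ((1 / μ) * (b * (1 - Real.exp (-2 * μ * x)) / (1 - Real.exp (-2 * μ * b)) - x))) :=
  stmt11_general b μ x x_R hb hμ T hT
end

section
/- Let b>0, r>0, x_R∈(0,b). Define c₃ = (1/r)·( x_R·sinh(b√(2r)) − b·sinh(x_R√(2r)) ) / ( sinh((b−x_R)√(2r)) + sinh(x_R√(2r)) ), c₁ = (b/r − c₃(e^{b√(2r)}−1)) / (2 sinh(b√(2r))), c₂ = (−b/r − c₃(1−e^{−b√(2r)})) / (2 sinh(b√(2r))), and u(x) = c₁e^{−x√(2r)} + c₂e^{x√(2r)} + x/r + c₃. Then u satisfies (1/2)u''(x) − r·u(x) + r·u(x_R) = −x on (0,b), with u(0)=u(b)=0. -/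
/-!
Writing `s = √(2r)`, the exponential part `c₁ e^{-xs} + c₂ e^{xs}` of `u` solves `½ v'' = r v`, so
`½ u'' - r u = -x - r c₃` and the equation reduces to `u(x_R) = c₃`. Given `c₃`, the coefficients
`c₁, c₂` are the solution of the boundary conditions `u(0) = u(b) = 0`, which gives the closed form
`c₁ e^{-y} + c₂ e^{y} = -(β sinh y + c₃ (sinh (t - y) + sinh y)) / sinh t` with `t = b s`, `β = b / r`;
the choice of `c₃` is exactly what makes this equal `-x_R / r` at `y = x_R s`.
-/

open Real

lemma sinh_add_sinh_pos {a c : ℝ} (h : 0 < a + c) : 0 < sinh a + sinh c := by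
  have : sinh (-c) < sinh a := sinh_lt_sinh.2 (by linarith)
  rw [sinh_neg] at this
  linarith

lemma hasDerivAt_exp_combination (c₁ c₂ s x : ℝ) :
    HasDerivAt (fun y => c₁ * exp (-y * s) + c₂ * exp (y * s))
      ((-s * c₁) * exp (-x * s) + (s * c₂) * exp (x * s)) x := by
  have hneg : HasDerivAt (fun y => exp (-y * s)) (exp (-x * s) * (-1 * s)) x :=
    ((hasDerivAt_neg x).mul_const s).exp
  have hpos : HasDerivAt (fun y => exp (y * s)) (exp (x * s) * (1 * s)) x :=
    ((hasDerivAt_id' x).mul_const s).exp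
  exact ((hneg.const_mul c₁).add (hpos.const_mul c₂)).congr_deriv (by ring)

lemma deriv_deriv_exp_combination_add_affine (c₁ c₂ s k d x : ℝ) :
    deriv (deriv fun y => c₁ * exp (-y * s) + c₂ * exp (y * s) + y / k + d) x =
      s ^ 2 * (c₁ * exp (-x * s) + c₂ * exp (x * s)) := by
  have hderiv : deriv (fun y => c₁ * exp (-y * s) + c₂ * exp (y * s) + y / k + d) =
      fun y => (-s * c₁) * exp (-y * s) + (s * c₂) * exp (y * s) + 1 / k := by
    funext y
    exact (((hasDerivAt_exp_combination c₁ c₂ s y).add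
      ((hasDerivAt_id y).div_const k)).add_const d).deriv
  rw [hderiv, ((hasDerivAt_exp_combination _ _ s x).add_const _).deriv]
  ring

lemma exp_combination_eq_of_coeffs {t β c₁ c₂ c₃ : ℝ}
    (hc₁ : c₁ = (β - c₃ * (exp t - 1)) / (2 * sinh t))
    (hc₂ : c₂ = (-β - c₃ * (1 - exp (-t))) / (2 * sinh t)) (y : ℝ) :
    c₁ * exp (-y) + c₂ * exp y = -(β * sinh y + c₃ * (sinh (t - y) + sinh y)) / sinh t := by
  subst hc₁ hc₂
  simp only [sinh_eq, exp_neg, exp_sub]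
  field_simp
  ring

theorem stmt14_general (b r x_R : ℝ) (hb : 0 < b) (hr : 0 < r)
    (c₁ c₂ c₃ : ℝ)
    (hc3 : c₃ = (1 / r) * (x_R * Real.sinh (b * Real.sqrt (2 * r)) -
      b * Real.sinh (x_R * Real.sqrt (2 * r))) /
      (Real.sinh ((b - x_R) * Real.sqrt (2 * r)) + Real.sinh (x_R * Real.sqrt (2 * r))))
    (hc1 : c₁ = (b / r - c₃ * (Real.exp (b * Real.sqrt (2 * r)) - 1)) /
      (2 * Real.sinh (b * Real.sqrt (2 * r))))
    (hc2 : c₂ = (-b / r - c₃ * (1 - Real.exp (-b * Real.sqrt (2 * r)))) /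
      (2 * Real.sinh (b * Real.sqrt (2 * r))))
    (u : ℝ → ℝ)
    (hu : ∀ x, u x = c₁ * Real.exp (-x * Real.sqrt (2 * r)) +
      c₂ * Real.exp (x * Real.sqrt (2 * r)) + x / r + c₃) :
    (∀ x ∈ Set.Ioo 0 b,
      (1 / 2) * deriv (deriv u) x - r * u x + r * u x_R = -x) ∧
    u 0 = 0 ∧ u b = 0 := by
  set s := sqrt (2 * r)
  have hs : s ^ 2 = 2 * r := sq_sqrt (by positivity)
  have hbs : 0 < b * s := mul_pos hb (sqrt_pos.2 (by positivity))
  have hsinh : sinh (b * s) ≠ 0 := (sinh_pos_iff.2 hbs).ne'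
  rw [neg_div, neg_mul] at hc2
  have hcombo := exp_combination_eq_of_coeffs hc1 hc2
  have hu_xR : u x_R = c₃ := by
    have hD : sinh ((b - x_R) * s) + sinh (x_R * s) ≠ 0 :=
      (sinh_add_sinh_pos (by linarith)).ne'
    have hc3D : c₃ * (sinh ((b - x_R) * s) + sinh (x_R * s)) =
        (x_R * sinh (b * s) - b * sinh (x_R * s)) / r := by
      rw [hc3, div_mul_cancel₀ _ hD, one_div_mul_eq_div]
    rw [hu, neg_mul, hcombo, ← sub_mul, hc3D]
    field_simp
    ring
  refine ⟨fun x _ => ?_, ?_, ?_⟩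
  · rw [funext hu, deriv_deriv_exp_combination_add_affine, ← funext hu, hu_xR, hu, hs]
    field_simp
    ring
  · rw [hu, neg_mul, zero_mul, hcombo, sub_zero, sinh_zero]
    field_simp
    ring
  · rw [hu, neg_mul, hcombo, sub_self, sinh_zero]
    field_simp
    ring

theorem stmt14 (b r x_R : ℝ) (hb : 0 < b) (hr : 0 < r) (hxR : x_R ∈ Set.Ioo 0 b)
    (c₁ c₂ c₃ : ℝ)
    (hc3 : c₃ = (1 / r) * (x_R * Real.sinh (b * Real.sqrt (2 * r)) -
      b * Real.sinh (x_R * Real.sqrt (2 * r))) /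
      (Real.sinh ((b - x_R) * Real.sqrt (2 * r)) + Real.sinh (x_R * Real.sqrt (2 * r))))
    (hc1 : c₁ = (b / r - c₃ * (Real.exp (b * Real.sqrt (2 * r)) - 1)) /
      (2 * Real.sinh (b * Real.sqrt (2 * r))))
    (hc2 : c₂ = (-b / r - c₃ * (1 - Real.exp (-b * Real.sqrt (2 * r)))) /
      (2 * Real.sinh (b * Real.sqrt (2 * r))))
    (u : ℝ → ℝ)
    (hu : ∀ x, u x = c₁ * Real.exp (-x * Real.sqrt (2 * r)) +
      c₂ * Real.exp (x * Real.sqrt (2 * r)) + x / r + c₃) :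
    (∀ x ∈ Set.Ioo 0 b,
      (1 / 2) * deriv (deriv u) x - r * u x + r * u x_R = -x) ∧
    u 0 = 0 ∧ u b = 0 :=
  stmt14_general b r x_R hb hr c₁ c₂ c₃ hc3 hc1 hc2 u hu
end
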